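/- arXiv:2002.11842 — 7 statements merged into one kernel-verified Lean document; each statement's English description precedes it below -/
import Mathlib

section
/- Let F be an r-dimensional subspace of ℝ^n with r < n, let p : ℝ^r → F be a linear isomorphism onto F, and let f : ℝ^n \ {0} → ℝ be a function attaining minima and maxima on relevant subspaces. Then for every k with 1 ≤ k ≤ r: max over (n−k+1)-dimensional subspaces S of ℝ^n of min_{x ∈ S, x ≠ 0} f(x) ≤ max over (r−k+1)-dimensional subspaces T of ℝ^r of min_{x̃ ∈ T, x̃ ≠ 0} f(p(x̃)). -/
open Module Submodule

lemma exists_submodule_finrank_eq' {K V : Type*} [Field K] [AddCommGroup V] [Module K V]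
    [FiniteDimensional K V] (m : ℕ) (h : m ≤ finrank K V) :
    ∃ W : Submodule K V, finrank K W = m := by
  let b := Module.finBasis K V
  refine ⟨span K (Set.range fun i : Fin m => b (Fin.castLE h i)), ?_⟩
  have hli : LinearIndependent K fun i : Fin m => b (Fin.castLE h i) :=
    b.linearIndependent.comp _ (Fin.castLE_injective h)
  rw [finrank_span_eq_card hli, Fintype.card_fin]

lemma exists_le_submodule_finrank_eq' {K V : Type*} [Field K] [AddCommGroup V] [Module K V]
    [FiniteDimensional K V] (P : Submodule K V) (m : ℕ) (h : m ≤ finrank K P) :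
    ∃ W : Submodule K V, W ≤ P ∧ finrank K W = m := by
  obtain ⟨W, hW⟩ := exists_submodule_finrank_eq' (K := K) (V := P) m h
  exact ⟨W.map P.subtype, Submodule.map_subtype_le P W,
    by rw [Submodule.finrank_map_subtype_eq]; exact hW⟩

/-- Min-max inequality: for an `r`-dimensional subspace `F` of `ℝ^n`
(`r < n`) with linear isomorphism `p : ℝ^r ≃ F`, and a function `f` attaining its minimum
and maximum on the nonzero vectors of every (nontrivial) subspace, for `1 ≤ k ≤ r`:
the max over `(n-k+1)`-dimensional subspaces `S ⊆ ℝ^n` of the min of `f` over nonzero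
`x ∈ S` is at most the max over `(r-k+1)`-dimensional subspaces `T ⊆ ℝ^r` of the min of
`f ∘ p` over nonzero `x̃ ∈ T`. -/
theorem minmax_le_of_subspace {n r : ℕ} (hrn : r < n)
    (F : Submodule ℝ (Fin n → ℝ)) (hF : Module.finrank ℝ F = r)
    (p : (Fin r → ℝ) ≃ₗ[ℝ] F)
    (f : (Fin n → ℝ) → ℝ)
    (hmin : ∀ S : Submodule ℝ (Fin n → ℝ), (∃ x ∈ S, x ≠ 0) →
      ∃ x ∈ S, x ≠ 0 ∧ ∀ y ∈ S, y ≠ 0 → f x ≤ f y)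
    (hmax : ∀ S : Submodule ℝ (Fin n → ℝ), (∃ x ∈ S, x ≠ 0) →
      ∃ x ∈ S, x ≠ 0 ∧ ∀ y ∈ S, y ≠ 0 → f y ≤ f x)
    (k : ℕ) (hk1 : 1 ≤ k) (hkr : k ≤ r) :
    sSup {a : ℝ | ∃ S : Submodule ℝ (Fin n → ℝ), Module.finrank ℝ S = n - k + 1 ∧
        a = sInf (f '' {x | x ∈ S ∧ x ≠ 0})} ≤
    sSup {a : ℝ | ∃ T : Submodule ℝ (Fin r → ℝ), Module.finrank ℝ T = r - k + 1 ∧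
        a = sInf ((fun y => f ((p y : Fin n → ℝ))) '' {y | y ∈ T ∧ y ≠ 0})} := by
  classical
  set q : (Fin r → ℝ) →ₗ[ℝ] (Fin n → ℝ) := F.subtype ∘ₗ (p : (Fin r → ℝ) →ₗ[ℝ] F) with hq
  have hqapp : ∀ y, q y = ((p y : F) : Fin n → ℝ) := fun y => rfl
  have hqinj : Function.Injective q := F.injective_subtype.comp p.injective
  have hrange : LinearMap.range q = F := by
    rw [hq, LinearMap.range_comp, LinearEquiv.range, Submodule.map_top, Submodule.range_subtype]
  -- set equality transporting T-sets to submodules of ℝ^n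
  have hset : ∀ T : Submodule ℝ (Fin r → ℝ),
      (fun y => f ((p y : Fin n → ℝ))) '' {y | y ∈ T ∧ y ≠ 0}
        = f '' {x | x ∈ T.map q ∧ x ≠ 0} := by
    intro T
    ext a
    constructor
    · rintro ⟨y, ⟨hyT, hy0⟩, rfl⟩
      exact ⟨q y, ⟨Submodule.mem_map_of_mem hyT,
        fun h => hy0 (hqinj (by simpa using h))⟩, rfl⟩
    · rintro ⟨x, ⟨hx, hx0⟩, rfl⟩
      obtain ⟨y, hyT, rfl⟩ := hx
      exact ⟨y, ⟨hyT, fun h => hx0 (by simp [h])⟩, rfl⟩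
  -- sInf of an f-image set with a minimizer
  have key : ∀ S : Submodule ℝ (Fin n → ℝ), (∃ x ∈ S, x ≠ 0) →
      ∃ x ∈ S, x ≠ 0 ∧ sInf (f '' {x | x ∈ S ∧ x ≠ 0}) = f x := by
    intro S hS
    obtain ⟨x, hxS, hx0, hxm⟩ := hmin S hS
    refine ⟨x, hxS, hx0, le_antisymm ?_ ?_⟩
    · exact csInf_le ⟨f x, by rintro _ ⟨y, ⟨hy, hy0⟩, rfl⟩; exact hxm y hy hy0⟩
        ⟨x, ⟨hxS, hx0⟩, rfl⟩
    · exact le_csInf ⟨f x, x, ⟨hxS, hx0⟩, rfl⟩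
        (by rintro _ ⟨y, ⟨hy, hy0⟩, rfl⟩; exact hxm y hy hy0)
  have hnn : finrank ℝ (Fin n → ℝ) = n := Module.finrank_fin_fun ℝ
  -- maximum of f on F
  have hFne : ∃ x ∈ F, x ≠ 0 := by
    rw [← Submodule.ne_bot_iff]
    intro h
    rw [h, finrank_bot] at hF
    omega
  obtain ⟨xM, hxMF, hxM0, hxMmax⟩ := hmax F hFne
  -- the RHS set is bounded above
  have hBdd : BddAbove {a : ℝ | ∃ T : Submodule ℝ (Fin r → ℝ),
      Module.finrank ℝ T = r - k + 1 ∧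
      a = sInf ((fun y => f ((p y : Fin n → ℝ))) '' {y | y ∈ T ∧ y ≠ 0})} := by
    refine ⟨f xM, ?_⟩
    rintro a ⟨T, hT, rfl⟩
    have hTne : ∃ x ∈ T.map q, x ≠ 0 := by
      have hy : ∃ y ∈ T, y ≠ 0 := by
        rw [← Submodule.ne_bot_iff]
        intro h
        rw [h, finrank_bot] at hT
        omega
      obtain ⟨y, hyT, hy0⟩ := hy
      exact ⟨q y, Submodule.mem_map_of_mem hyT, fun h => hy0 (hqinj (by simpa using h))⟩
    obtain ⟨x, hxS, hx0, hxeq⟩ := key (T.map q) hTne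
    rw [hset T, hxeq]
    have hxF : x ∈ F := by
      obtain ⟨y, _, rfl⟩ := hxS
      exact (p y).2
    exact hxMmax x hxF hx0
  -- LHS nonempty
  have hAne : {a : ℝ | ∃ S : Submodule ℝ (Fin n → ℝ), Module.finrank ℝ S = n - k + 1 ∧
      a = sInf (f '' {x | x ∈ S ∧ x ≠ 0})}.Nonempty := by
    obtain ⟨S, hS⟩ := exists_submodule_finrank_eq' (K := ℝ) (V := Fin n → ℝ) (n - k + 1)
      (by omega)
    exact ⟨_, S, hS, rfl⟩
  refine csSup_le hAne ?_
  rintro a ⟨S, hS, rfl⟩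
  -- dimension count for S ⊓ F
  have hdim : r - k + 1 ≤ finrank ℝ ↥(S ⊓ F) := by
    have h1 := Submodule.finrank_sup_add_finrank_inf_eq S F
    have h2 := Submodule.finrank_le (S ⊔ F)
    omega
  obtain ⟨W, hWle, hW⟩ := exists_le_submodule_finrank_eq' (S ⊓ F) (r - k + 1) hdim
  have hWF : W ≤ F := hWle.trans inf_le_right
  have hWS : W ≤ S := hWle.trans inf_le_left
  -- pull W back to ℝ^r
  set T : Submodule ℝ (Fin r → ℝ) := W.comap q with hT
  have hmapT : T.map q = W := by
    rw [hT, Submodule.map_comap_eq, hrange, inf_eq_right.mpr hWF]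
  have hTrk : finrank ℝ T = r - k + 1 := by
    have := (Submodule.equivMapOfInjective q hqinj T).finrank_eq
    rw [hmapT] at this
    omega
  -- the element of the RHS set given by T
  have hWne : ∃ x ∈ W, x ≠ 0 := by
    rw [← Submodule.ne_bot_iff]
    intro h
    rw [h, finrank_bot] at hW
    omega
  obtain ⟨x₀, hx₀W, hx₀0, hx₀eq⟩ := key W hWne
  have hb : sInf ((fun y => f ((p y : Fin n → ℝ))) '' {y | y ∈ T ∧ y ≠ 0}) = f x₀ := by
    rw [hset T, hmapT, hx₀eq]
  have hmem : sInf ((fun y => f ((p y : Fin n → ℝ))) '' {y | y ∈ T ∧ y ≠ 0}) ∈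
      {a : ℝ | ∃ T : Submodule ℝ (Fin r → ℝ), Module.finrank ℝ T = r - k + 1 ∧
        a = sInf ((fun y => f ((p y : Fin n → ℝ))) '' {y | y ∈ T ∧ y ≠ 0})} :=
    ⟨T, hTrk, rfl⟩
  have hSmin := hmin S ⟨x₀, hWS hx₀W, hx₀0⟩
  obtain ⟨m, hmS, hm0, hmmin⟩ := hSmin
  have ha : sInf (f '' {x | x ∈ S ∧ x ≠ 0}) ≤ f x₀ :=
    csInf_le ⟨f m, by rintro _ ⟨y, ⟨hy, hy0⟩, rfl⟩; exact hmmin y hy hy0⟩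
      ⟨x₀, ⟨hWS hx₀W, hx₀0⟩, rfl⟩
  calc sInf (f '' {x | x ∈ S ∧ x ≠ 0}) ≤ f x₀ := ha
    _ = _ := hb.symm
    _ ≤ _ := le_csSup hBdd hmem
end

section
/- Let M ∈ ℝ^{n×n} and N ∈ ℝ^{r×r} be real symmetric matrices with r < n. Suppose there exist r-dimensional subspaces A, B ⊆ ℝ^n with linear isomorphisms p_A : ℝ^r → A and p_B : ℝ^r → B such that for all nonzero x ∈ ℝ^r, R(M, p_A(x)) ≤ R(N, x) and R(M, p_B(x)) ≥ R(N, x), where R(M, x) = xᵀMx / xᵀx is the Rayleigh quotient. Then the eigenvalues of N interlace those of M, i.e., λ_k(M) ≤ λ_k(N) ≤ λ_{n−r+k}(M) for k = 1,…,r. -/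
/-!
Courant–Fischer, one inequality at a time. Orthogonality to the eigenvectors of `N` above the
`k`-th one cuts out a `(k+1)`-dimensional subspace `W ⊆ ℝ^r` on which `R(N, ·) ≤ λ_k(N)`;
orthogonality to the eigenvectors of `M` below the `k`-th one cuts out an `(n-k)`-dimensional
subspace of `ℝ^n` on which `R(M, ·) ≥ λ_k(M)`. By dimension count the latter meets `p_A(W)` in
some `p_A(y) ≠ 0`, and then `λ_k(M) ≤ R(M, p_A y) ≤ R(N, y) ≤ λ_k(N)`. The upper bound
`λ_k(N) ≤ λ_{n-r+k}(M)` is the mirror argument with `p_B`.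
-/

open scoped Matrix

/-- The `k`-th smallest eigenvalue of a real matrix (eigenvalues sorted ascending);
junk value `0` if the matrix is not Hermitian (i.e. not symmetric, over `ℝ`). -/
noncomputable def sortedEig {m : ℕ} (A : Matrix (Fin m) (Fin m) ℝ) : Fin m → ℝ :=
  if h : A.IsHermitian then fun k => h.eigenvalues (Tuple.sort h.eigenvalues k) else fun _ => 0

/-- `B` (of size `r`) interlaces `A` (of size `n`, `r < n`):
`λ_k(A) ≤ λ_k(B) ≤ λ_{n-r+k}(A)` for `k = 1, …, r` (0-indexed here). -/
def Interlaces {r n : ℕ} (hrn : r < n) (B : Matrix (Fin r) (Fin r) ℝ)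
    (A : Matrix (Fin n) (Fin n) ℝ) : Prop :=
  ∀ k : Fin r,
    sortedEig A ⟨k.1, lt_trans k.isLt hrn⟩ ≤ sortedEig B k ∧
    sortedEig B k ≤ sortedEig A ⟨n - r + k.1, by have := k.isLt; omega⟩

/-- The Rayleigh quotient `R(M, x) = xᵀ M x / xᵀ x`. -/
noncomputable def rayleigh {m : ℕ} (M : Matrix (Fin m) (Fin m) ℝ) (x : Fin m → ℝ) : ℝ :=
  (x ⬝ᵥ M.mulVec x) / (x ⬝ᵥ x)

open Module

theorem dotProduct_self_pos {ι : Type*} [Fintype ι] {x : ι → ℝ} (hx : x ≠ 0) : 0 < x ⬝ᵥ x := by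
  simpa using Matrix.dotProduct_star_self_pos_iff.2 hx

theorem OrthonormalBasis.sum_dotProduct_mul_dotProduct {ι : Type*} [Fintype ι]
    (b : OrthonormalBasis ι ℝ (EuclideanSpace ℝ ι)) (x y : ι → ℝ) :
    ∑ i, (⇑(b i) ⬝ᵥ x) * (⇑(b i) ⬝ᵥ y) = x ⬝ᵥ y := by
  simpa [EuclideanSpace.inner_eq_star_dotProduct, dotProduct_comm] using
    b.sum_inner_mul_inner (WithLp.toLp 2 x) (WithLp.toLp 2 y)

theorem Submodule.finrank_map_of_injective {R V V' : Type*} [Ring R] [AddCommGroup V]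
    [Module R V] [AddCommGroup V'] [Module R V'] {f : V →ₗ[R] V'} (hf : Function.Injective f)
    (W : Submodule R V) : finrank R (W.map f) = finrank R W :=
  (W.equivMapOfInjective f hf).finrank_eq.symm

theorem Submodule.exists_mem_inf_ne_zero_of_finrank_lt {K V : Type*} [DivisionRing K]
    [AddCommGroup V] [Module K V] [FiniteDimensional K V] {W₁ W₂ : Submodule K V}
    (h : finrank K V < finrank K W₁ + finrank K W₂) : ∃ x ∈ W₁ ⊓ W₂, x ≠ 0 := by
  refine (Submodule.ne_bot_iff _).1 fun hbot => ?_
  exact (Submodule.finrank_add_finrank_le_of_disjoint (disjoint_iff.2 hbot)).not_gt h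

namespace Matrix

theorem mem_ker_mulVecLin_iff {R ι κ : Type*} [CommSemiring R] [Fintype ι] (A : Matrix κ ι R)
    (x : ι → R) : x ∈ LinearMap.ker A.mulVecLin ↔ ∀ j, A j ⬝ᵥ x = 0 := by
  simp [funext_iff, mulVec]

theorem card_le_card_add_finrank_ker_mulVecLin {K ι κ : Type*} [Field K] [Fintype ι]
    [Fintype κ] (A : Matrix κ ι K) :
    Fintype.card ι ≤ Fintype.card κ + finrank K (LinearMap.ker A.mulVecLin) := by
  have hrank := A.mulVecLin.finrank_range_add_finrank_ker
  have hheight := A.rank_le_card_height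
  rw [Matrix.rank] at hheight
  rw [Module.finrank_fintype_fun_eq_card] at hrank
  omega

namespace IsHermitian

section Eigenbasis

variable {ι : Type*} [Fintype ι] {M : Matrix ι ι ℝ} (hM : M.IsHermitian)
  (b : OrthonormalBasis ι ℝ (EuclideanSpace ℝ ι)) (μ : ι → ℝ)
  (hb : ∀ i, M *ᵥ ⇑(b i) = μ i • ⇑(b i))
include hM hb

theorem dotProduct_mulVec_eq_sum (x : ι → ℝ) :
    x ⬝ᵥ M *ᵥ x = ∑ i, μ i * (⇑(b i) ⬝ᵥ x) ^ 2 := by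
  have hsymm : Mᵀ = M := by simpa using hM.eq
  rw [← b.sum_dotProduct_mul_dotProduct]
  refine Fintype.sum_congr _ _ fun i => ?_
  have hi : ⇑(b i) ⬝ᵥ M *ᵥ x = μ i * (⇑(b i) ⬝ᵥ x) := by
    rw [dotProduct_mulVec]
    conv_lhs => rw [← hsymm]
    rw [vecMul_transpose, hb, smul_dotProduct, smul_eq_mul]
  rw [hi]
  ring

theorem dotProduct_mulVec_le {c : ℝ} {x : ι → ℝ} (h : ∀ i, ⇑(b i) ⬝ᵥ x = 0 ∨ μ i ≤ c) :
    x ⬝ᵥ M *ᵥ x ≤ c * (x ⬝ᵥ x) := by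
  rw [hM.dotProduct_mulVec_eq_sum b μ hb, ← b.sum_dotProduct_mul_dotProduct, Finset.mul_sum]
  refine Finset.sum_le_sum fun i _ => ?_
  rcases h i with h0 | hμ
  · simp [h0]
  · rw [← sq]
    exact mul_le_mul_of_nonneg_right hμ (sq_nonneg _)

theorem le_dotProduct_mulVec {c : ℝ} {x : ι → ℝ} (h : ∀ i, ⇑(b i) ⬝ᵥ x = 0 ∨ c ≤ μ i) :
    c * (x ⬝ᵥ x) ≤ x ⬝ᵥ M *ᵥ x := by
  have hneg := hM.neg.dotProduct_mulVec_le b (-μ) (c := -c)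
    (fun i => by rw [neg_mulVec, hb, Pi.neg_apply, neg_smul]) fun i => (h i).imp_right neg_le_neg
  rw [neg_mulVec, dotProduct_neg, neg_mul] at hneg
  exact neg_le_neg_iff.1 hneg

end Eigenbasis

variable {m : ℕ} {M : Matrix (Fin m) (Fin m) ℝ}

theorem sortedEig_eq (hM : M.IsHermitian) :
    sortedEig M = fun k => hM.eigenvalues (Tuple.sort hM.eigenvalues k) :=
  dif_pos hM

theorem monotone_sortedEig (hM : M.IsHermitian) : Monotone (sortedEig M) := by
  rw [hM.sortedEig_eq]
  exact Tuple.monotone_sort hM.eigenvalues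

noncomputable def sortedEigenbasis (hM : M.IsHermitian) :
    OrthonormalBasis (Fin m) ℝ (EuclideanSpace ℝ (Fin m)) :=
  hM.eigenvectorBasis.reindex (Tuple.sort hM.eigenvalues).symm

theorem mulVec_sortedEigenbasis (hM : M.IsHermitian) (i : Fin m) :
    M *ᵥ ⇑(hM.sortedEigenbasis i) = sortedEig M i • ⇑(hM.sortedEigenbasis i) := by
  simp only [sortedEigenbasis, OrthonormalBasis.reindex_apply, Equiv.symm_symm, hM.sortedEig_eq]
  exact hM.mulVec_eigenvectorBasis _

theorem exists_rayleigh_le_sortedEig (hM : M.IsHermitian) (k : Fin m) :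
    ∃ W : Submodule ℝ (Fin m → ℝ), k.1 + 1 ≤ finrank ℝ W ∧
      ∀ x ∈ W, x ≠ 0 → rayleigh M x ≤ sortedEig M k := by
  let U : Matrix (Finset.Ioi k) (Fin m) ℝ := Matrix.of fun j => hM.sortedEigenbasis j
  refine ⟨LinearMap.ker U.mulVecLin, ?_, fun x hx hx0 => ?_⟩
  · have := U.card_le_card_add_finrank_ker_mulVecLin
    simp only [Fintype.card_fin, Fintype.card_coe, Fin.card_Ioi] at this
    omega
  · rw [mem_ker_mulVecLin_iff] at hx
    rw [rayleigh, div_le_iff₀ (dotProduct_self_pos hx0)]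
    refine hM.dotProduct_mulVec_le _ _ hM.mulVec_sortedEigenbasis fun i => ?_
    rcases le_or_gt i k with hik | hki
    · exact .inr (hM.monotone_sortedEig hik)
    · exact .inl (hx ⟨i, Finset.mem_Ioi.2 hki⟩)

theorem exists_sortedEig_le_rayleigh (hM : M.IsHermitian) (k : Fin m) :
    ∃ W : Submodule ℝ (Fin m → ℝ), m - k.1 ≤ finrank ℝ W ∧
      ∀ x ∈ W, x ≠ 0 → sortedEig M k ≤ rayleigh M x := by
  let U : Matrix (Finset.Iio k) (Fin m) ℝ := Matrix.of fun j => hM.sortedEigenbasis j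
  refine ⟨LinearMap.ker U.mulVecLin, ?_, fun x hx hx0 => ?_⟩
  · have := U.card_le_card_add_finrank_ker_mulVecLin
    simp only [Fintype.card_fin, Fintype.card_coe, Fin.card_Iio] at this
    omega
  · rw [mem_ker_mulVecLin_iff] at hx
    rw [rayleigh, le_div_iff₀ (dotProduct_self_pos hx0)]
    refine hM.le_dotProduct_mulVec _ _ hM.mulVec_sortedEigenbasis fun i => ?_
    rcases lt_or_ge i k with hik | hki
    · exact .inl (hx ⟨i, Finset.mem_Iio.2 hik⟩)
    · exact .inr (hM.monotone_sortedEig hki)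

theorem exists_sortedEig_le_rayleigh_of_le_finrank (hM : M.IsHermitian) (k : Fin m)
    {V : Submodule ℝ (Fin m → ℝ)} (hV : k.1 + 1 ≤ finrank ℝ V) :
    ∃ x ∈ V, x ≠ 0 ∧ sortedEig M k ≤ rayleigh M x := by
  obtain ⟨W, hW, hWM⟩ := hM.exists_sortedEig_le_rayleigh k
  obtain ⟨x, ⟨hxV, hxW⟩, hx0⟩ := Submodule.exists_mem_inf_ne_zero_of_finrank_lt
    (W₁ := V) (W₂ := W) (by rw [finrank_fin_fun]; omega)
  exact ⟨x, hxV, hx0, hWM x hxW hx0⟩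

theorem exists_rayleigh_le_sortedEig_of_le_finrank (hM : M.IsHermitian) (k : Fin m)
    {V : Submodule ℝ (Fin m → ℝ)} (hV : m - k.1 ≤ finrank ℝ V) :
    ∃ x ∈ V, x ≠ 0 ∧ rayleigh M x ≤ sortedEig M k := by
  obtain ⟨W, hW, hWM⟩ := hM.exists_rayleigh_le_sortedEig k
  obtain ⟨x, ⟨hxV, hxW⟩, hx0⟩ := Submodule.exists_mem_inf_ne_zero_of_finrank_lt
    (W₁ := V) (W₂ := W) (by rw [finrank_fin_fun]; omega)
  exact ⟨x, hxV, hx0, hWM x hxW hx0⟩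

end IsHermitian

end Matrix

section Transfer

variable {n r : ℕ} {M : Matrix (Fin n) (Fin n) ℝ} {N : Matrix (Fin r) (Fin r) ℝ}
  {L : (Fin r → ℝ) →ₗ[ℝ] (Fin n → ℝ)}

theorem sortedEig_le_sortedEig_of_rayleigh_le (hM : M.IsHermitian) (hN : N.IsHermitian)
    (hL : Function.Injective L) (hR : ∀ x, x ≠ 0 → rayleigh M (L x) ≤ rayleigh N x)
    (k : Fin r) (j : Fin n) (hjk : j.1 ≤ k.1) : sortedEig M j ≤ sortedEig N k := by
  obtain ⟨W, hW, hWN⟩ := hN.exists_rayleigh_le_sortedEig k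
  obtain ⟨_, ⟨y, hyW, rfl⟩, hLy, hMy⟩ := hM.exists_sortedEig_le_rayleigh_of_le_finrank j
    (V := W.map L) (by rw [Submodule.finrank_map_of_injective hL]; omega)
  have hy : y ≠ 0 := by rintro rfl; exact hLy (map_zero L)
  exact hMy.trans ((hR y hy).trans (hWN y hyW hy))

theorem sortedEig_le_sortedEig_of_le_rayleigh (hM : M.IsHermitian) (hN : N.IsHermitian)
    (hL : Function.Injective L) (hR : ∀ x, x ≠ 0 → rayleigh N x ≤ rayleigh M (L x))
    (k : Fin r) (j : Fin n) (hkj : n - r + k.1 ≤ j.1) : sortedEig N k ≤ sortedEig M j := by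
  obtain ⟨W, hW, hWN⟩ := hN.exists_sortedEig_le_rayleigh k
  obtain ⟨_, ⟨y, hyW, rfl⟩, hLy, hMy⟩ := hM.exists_rayleigh_le_sortedEig_of_le_finrank j
    (V := W.map L) (by rw [Submodule.finrank_map_of_injective hL]; omega)
  have hy : y ≠ 0 := by rintro rfl; exact hLy (map_zero L)
  exact (hWN y hyW hy).trans ((hR y hy).trans hMy)

end Transfer

theorem interlaces_of_rayleigh_general {n r : ℕ} (hrn : r < n)
    (M : Matrix (Fin n) (Fin n) ℝ) (N : Matrix (Fin r) (Fin r) ℝ)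
    (hM : M.IsHermitian) (hN : N.IsHermitian)
    (A B : Submodule ℝ (Fin n → ℝ))
    (pA : (Fin r → ℝ) ≃ₗ[ℝ] A) (pB : (Fin r → ℝ) ≃ₗ[ℝ] B)
    (hRA : ∀ x : Fin r → ℝ, x ≠ 0 → rayleigh M ((pA x : Fin n → ℝ)) ≤ rayleigh N x)
    (hRB : ∀ x : Fin r → ℝ, x ≠ 0 → rayleigh N x ≤ rayleigh M ((pB x : Fin n → ℝ))) :
    Interlaces hrn N M := fun k =>
  ⟨sortedEig_le_sortedEig_of_rayleigh_le (L := A.subtype ∘ₗ pA.toLinearMap) hM hN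
      (A.injective_subtype.comp pA.injective) hRA k _ le_rfl,
    sortedEig_le_sortedEig_of_le_rayleigh (L := B.subtype ∘ₗ pB.toLinearMap) hM hN
      (B.injective_subtype.comp pB.injective) hRB k _ le_rfl⟩

/-- (Interlacing graph reduction theorem, matrix form.) If there are
`r`-dimensional subspaces `A, B ⊆ ℝ^n` with isomorphisms `pA : ℝ^r ≃ A`, `pB : ℝ^r ≃ B`
such that `R(M, pA x) ≤ R(N, x)` and `R(M, pB x) ≥ R(N, x)` for all nonzero `x ∈ ℝ^r`,
then the eigenvalues of `N` interlace those of `M`. -/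
theorem interlaces_of_rayleigh {n r : ℕ} (hrn : r < n)
    (M : Matrix (Fin n) (Fin n) ℝ) (N : Matrix (Fin r) (Fin r) ℝ)
    (hM : M.IsHermitian) (hN : N.IsHermitian)
    (A B : Submodule ℝ (Fin n → ℝ))
    (hA : Module.finrank ℝ A = r) (hB : Module.finrank ℝ B = r)
    (pA : (Fin r → ℝ) ≃ₗ[ℝ] A) (pB : (Fin r → ℝ) ≃ₗ[ℝ] B)
    (hRA : ∀ x : Fin r → ℝ, x ≠ 0 → rayleigh M ((pA x : Fin n → ℝ)) ≤ rayleigh N x)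
    (hRB : ∀ x : Fin r → ℝ, x ≠ 0 → rayleigh N x ≤ rayleigh M ((pB x : Fin n → ℝ))) :
    Interlaces hrn N M :=
  interlaces_of_rayleigh_general hrn M N hM hN A B pA pB hRA hRB
end

section
/- Let G be a finite simple graph and E_cs an edge contraction set with edge contraction partition π. Then for every vertex ṽ of the contraction G ⫽ E_cs, d_ṽ(G ⫽ E_cs) ≤ (∑_{v ∈ C_ṽ(π)} d_v(G)) − 2(|C_ṽ(π)| − 1). -/
/-- The simple graph contraction of `G` over the partition of its vertex set given by the
fibers of `f` (cells are fibers): distinct cells are adjacent iff some pair of their members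
is adjacent in `G` (self-loops and duplicate edges removed). -/
def contraction {V W : Type*} (G : SimpleGraph V) (f : V → W) : SimpleGraph W where
  Adj i j := i ≠ j ∧ ∃ u v, f u = i ∧ f v = j ∧ G.Adj u v
  symm := ⟨fun _ _ ⟨hne, u, v, hu, hv, h⟩ => ⟨hne.symm, v, u, hv, hu, h.symm⟩⟩
  loopless := ⟨fun _ ⟨h, _⟩ => h rfl⟩

/-- The edge-based contraction `G ⫽ E_cs`: the contraction of `G` over the partition of
`V(G)` into connected components of the graph `(V(G), E_cs)`. -/
def contractionE {V : Type*} (G : SimpleGraph V) (Ecs : Set (Sym2 V)) :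
    SimpleGraph (SimpleGraph.fromEdgeSet Ecs).ConnectedComponent :=
  contraction G (SimpleGraph.fromEdgeSet Ecs).connectedComponentMk

/-!
Write `H = (V, E_cs)` and `C` for the cell of `ṽ`. Every neighbour of `ṽ` in `G ⫽ E_cs` is the
cell of some `G`-neighbour of a vertex of `C` lying outside `C`, so `d_ṽ` is at most the number
of `G`-adjacencies leaving `C`. The remaining adjacencies, those inside `C`, include all
`H`-adjacencies at vertices of `C`; since `C` induces a connected subgraph of `H`, it carries at
least `|C| - 1` edges of `H`, i.e. at least `2(|C| - 1)` such adjacencies.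
-/

open Finset SimpleGraph

namespace SimpleGraph.ConnectedComponent
variable {V : Type*} [Fintype V] {H : SimpleGraph V} [DecidableRel H.Adj]
  [DecidableEq H.ConnectedComponent]

lemma two_mul_card_le_sum_degree_add_two (C : H.ConnectedComponent) :
    2 * #{v | H.connectedComponentMk v = C} ≤
      ∑ v with H.connectedComponentMk v = C, H.degree v + 2 := by
  classical
  have hmem : ∀ v, v ∈ ({v | H.connectedComponentMk v = C} : Finset V) ↔ v ∈ C.supp := by
    simp
  have hconn : (H.induce C.supp).Connected := C.connected_toSimpleGraph
  have hdeg : ∑ v with H.connectedComponentMk v = C, H.degree v =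
      ∑ v : C.supp, (H.induce C.supp).degree v := by
    rw [Finset.sum_subtype _ hmem]
    exact Finset.sum_congr rfl fun v _ =>
      (degree_induce_of_neighborSet_subset fun _ hw => C.mem_supp_of_adj_mem_supp v.2 hw).symm
  have hcard : #{v | H.connectedComponentMk v = C} = Fintype.card C.supp :=
    Finset.card_eq_of_equiv_fintype (Equiv.subtypeEquivRight hmem)
  have hedges := hconn.card_vert_le_card_edgeSet_add_one
  rw [Nat.card_eq_fintype_card, Nat.card_eq_fintype_card, ← edgeFinset_card] at hedges
  rw [hcard, hdeg, sum_degrees_eq_twice_card_edges]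
  omega
end SimpleGraph.ConnectedComponent

section
variable {V W : Type*} [Fintype V] [DecidableEq W] {G : SimpleGraph V} [DecidableRel G.Adj]

lemma ncard_neighborSet_contraction_le (f : V → W) (w : W) :
    ((contraction G f).neighborSet w).ncard ≤
      ∑ v with f v = w, #{u ∈ G.neighborFinset v | f u ≠ w} := by
  classical
  set out := ({v | f v = w} : Finset V).biUnion fun v => {u ∈ G.neighborFinset v | f u ≠ w}
  have hsub : (contraction G f).neighborSet w ⊆ ↑(out.image f) := by
    rintro _ ⟨hne, a, b, rfl, rfl, hab⟩
    simp only [coe_image, out]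
    exact ⟨b, mem_biUnion.2 ⟨a, by simp, by simp [hab, Ne.symm hne]⟩, rfl⟩
  calc ((contraction G f).neighborSet w).ncard ≤ #(out.image f) :=
        (Set.ncard_le_ncard hsub).trans_eq (Set.ncard_coe_finset _)
    _ ≤ #out := card_image_le
    _ ≤ _ := card_biUnion_le

theorem ncard_neighborSet_contraction_add_two_mul_card_le {H : SimpleGraph V} [DecidableRel H.Adj]
    [DecidableEq H.ConnectedComponent] (hHG : H ≤ G) (C : H.ConnectedComponent) :
    ((contraction G H.connectedComponentMk).neighborSet C).ncard +
        2 * #{v | H.connectedComponentMk v = C} ≤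
      ∑ v with H.connectedComponentMk v = C, G.degree v + 2 := by
  have hout := ncard_neighborSet_contraction_le (G := G) H.connectedComponentMk C
  have hcomponent := C.two_mul_card_le_sum_degree_add_two
  have hinside : ∑ v with H.connectedComponentMk v = C, H.degree v ≤
      ∑ v with H.connectedComponentMk v = C,
        #{u ∈ G.neighborFinset v | H.connectedComponentMk u = C} := by
    refine sum_le_sum fun v hv => ?_
    rw [(mem_filter.1 hv).2.symm, ← card_neighborFinset_eq_degree]
    refine card_le_card fun u hu => ?_
    rw [mem_neighborFinset] at hu
    simp only [mem_filter, mem_neighborFinset]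
    exact ⟨hHG hu, (ConnectedComponent.connectedComponentMk_eq_of_adj hu).symm⟩
  have hsplit : ∑ v with H.connectedComponentMk v = C, G.degree v =
      ∑ v with H.connectedComponentMk v = C,
        #{u ∈ G.neighborFinset v | H.connectedComponentMk u ≠ C} +
      ∑ v with H.connectedComponentMk v = C,
        #{u ∈ G.neighborFinset v | H.connectedComponentMk u = C} := by
    rw [← sum_add_distrib]
    refine sum_congr rfl fun v _ => ?_
    rw [add_comm, card_filter_add_card_filter_not, card_neighborFinset_eq_degree]
  omega
end

/-- (Degree-contraction bound.) For an edge contraction set `E_cs` with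
edge contraction partition `π` (connected components of `(V, E_cs)`), every vertex `vt` of
`G ⫽ E_cs` satisfies
`d_vt(G ⫽ E_cs) ≤ (∑_{v ∈ C_vt} d_v(G)) − 2(|C_vt| − 1)`. -/
theorem degree_contractionE_le {n : ℕ} (G : SimpleGraph (Fin n)) [DecidableRel G.Adj]
    (Ecs : Set (Sym2 (Fin n))) (hE : Ecs ⊆ G.edgeSet)
    (vt : (SimpleGraph.fromEdgeSet Ecs).ConnectedComponent) :
    (((contractionE G Ecs).neighborSet vt).ncard : ℤ) ≤
      (∑ᶠ v ∈ {v : Fin n | (SimpleGraph.fromEdgeSet Ecs).connectedComponentMk v = vt},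
        (G.degree v : ℤ)) -
      2 * (({v : Fin n | (SimpleGraph.fromEdgeSet Ecs).connectedComponentMk v = vt}.ncard : ℤ)
        - 1) := by
  classical
  have key := ncard_neighborSet_contraction_add_two_mul_card_le
    ((fromEdgeSet_le G).2 (Set.sdiff_subset.trans hE)) vt
  have hcell : {v | (fromEdgeSet Ecs).connectedComponentMk v = vt} =
      ↑({v | (fromEdgeSet Ecs).connectedComponentMk v = vt} : Finset (Fin n)) := by
    simp
  rw [hcell, finsum_mem_coe_finset, Set.ncard_coe_finset]
  unfold contractionE
  linarith
end

section
/- Let G be a finite simple graph and E_cs an edge contraction set such that G ⫽ E_cs is cycle-invariant (there is a one-to-one correspondence between simple cycles of G and simple cycles of G ⫽ E_cs). Then G ⫽ E_cs is edge-matching; that is, |E(G) \ E_cs| = |E(G ⫽ E_cs)|. -/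
/-- The type of simple cycles of a graph (as cycle walks based at a vertex). -/
def CycleType {V : Type*} (G : SimpleGraph V) := Σ v : V, {w : G.Walk v v // w.IsCycle}

/-!
Every cycle of the contraction lifts to a cycle of `G`: pick a representative edge for each of
its edges and join consecutive representatives by paths inside the components. Mapping the lift
back to components and collapsing consecutive repetitions recovers the original cycle, so lifting
is injective; with finitely many cycles, cycle-invariance makes it surjective, hence every cycle
of `G` meets at least three components. An edge outside `E_cs` within one component, or two
such edges joining the same two components, would close a cycle meeting at most two components,
so `Sym2.map` sends `E(G) \ E_cs` bijectively onto the edges of the contraction.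
-/

namespace List

variable {α : Type*} [DecidableEq α]

theorem mem_destutter'_ne_iff {x : α} :
    ∀ {a : α} {l : List α}, x ∈ l.destutter' (· ≠ ·) a ↔ x ∈ a :: l
  | a, [] => by simp [destutter'_nil]
  | a, b :: l => by
    by_cases hab : a = b
    · subst hab
      rw [destutter'_cons_neg _ (by simp), mem_destutter'_ne_iff]
      simp
    · rw [destutter'_cons_pos _ hab, mem_cons, mem_destutter'_ne_iff, ← mem_cons]

theorem mem_destutter_ne_iff {x : α} {l : List α} : x ∈ l.destutter (· ≠ ·) ↔ x ∈ l := by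
  cases l with
  | nil => simp
  | cons a l => rw [destutter_cons', mem_destutter'_ne_iff]

theorem destutter'_ne_append_of_forall_eq {a : α} {l₂ : List α} :
    ∀ {l₁ : List α}, (∀ x ∈ l₁, x = a) →
      (l₁ ++ l₂).destutter' (· ≠ ·) a = l₂.destutter' (· ≠ ·) a
  | [], _ => rfl
  | b :: l₁, h => by
    rw [cons_append, destutter'_cons_neg _ (by simp [h b mem_cons_self]),
      destutter'_ne_append_of_forall_eq fun x hx => h x (mem_cons_of_mem b hx)]

theorem destutter_ne_cons_of_forall_eq {a : α} {l : List α} (hl : ∀ x ∈ l, x = a) :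
    (a :: l).destutter (· ≠ ·) = [a] := by
  rw [destutter_cons', ← append_nil l, destutter'_ne_append_of_forall_eq hl, destutter'_nil]

theorem destutter_ne_cons_append_cons_of_forall_eq {a b : α} {l₁ l₂ : List α}
    (hl₁ : ∀ x ∈ l₁, x = a) (hab : a ≠ b) :
    (a :: l₁ ++ b :: l₂).destutter (· ≠ ·) = a :: (b :: l₂).destutter (· ≠ ·) := by
  rw [cons_append, destutter_cons', destutter'_ne_append_of_forall_eq hl₁,
    destutter'_cons_pos _ hab, destutter_cons']

end List

theorem CycleType.ext_support {V : Type*} {G : SimpleGraph V} {C C' : CycleType G}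
    (h : C.2.1.support = C'.2.1.support) : C = C' := by
  obtain ⟨v, p, hp⟩ := C
  obtain ⟨v', p', hp'⟩ := C'
  rw [← p.cons_tail_support, ← p'.cons_tail_support] at h
  obtain rfl := (List.cons_eq_cons.mp h).1
  obtain rfl := SimpleGraph.Walk.ext_support (p.cons_tail_support ▸ p'.cons_tail_support ▸ h)
  rfl

instance CycleType.finite {V : Type*} [Finite V] (G : SimpleGraph V) : Finite (CycleType G) := by
  have := Fintype.ofFinite V
  classical
  refine Finite.of_injective (fun C : CycleType G =>
    (C.1, (⟨C.2.1.support.tail, C.2.2.support_nodup⟩ : {l : List V // l.Nodup}))) ?_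
  rintro ⟨v, p, hp⟩ ⟨v', p', hp'⟩ h
  simp only [Prod.mk.injEq, Subtype.mk.injEq] at h
  obtain ⟨rfl, h⟩ := h
  exact CycleType.ext_support (by rw [← p.cons_tail_support, ← p'.cons_tail_support, h])

namespace SimpleGraph

variable {V : Type*} {G H : SimpleGraph V}

theorem Walk.IsCycle.exists_mem_support_ne_ne {u : V} {p : G.Walk u u} (hp : p.IsCycle)
    (a b : V) : ∃ x ∈ p.support, x ≠ a ∧ x ≠ b := by
  classical
  by_contra! h
  have hsub : p.support.tail.toFinset ⊆ {a, b} := fun x hx => by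
    have := h x (List.mem_of_mem_tail (List.mem_toFinset.mp hx))
    grind
  have hcard := Finset.card_le_card hsub
  rw [List.toFinset_card_of_nodup hp.support_nodup, List.length_tail, Walk.length_support] at hcard
  have := hp.three_le_length
  have := Finset.card_le_two (a := a) (b := b)
  omega

theorem exists_isPath_of_connectedComponentMk_eq (hH : H ≤ G) {x y : V}
    (h : H.connectedComponentMk x = H.connectedComponentMk y) :
    ∃ q : G.Walk x y, q.IsPath ∧
      ∀ z ∈ q.support, H.connectedComponentMk z = H.connectedComponentMk x := by
  classical
  obtain ⟨p⟩ := ConnectedComponent.exact h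
  refine ⟨p.toPath.1.mapLe hH, p.toPath.2.mapLe hH, fun z hz => ?_⟩
  rw [Walk.support_mapLe_eq_support] at hz
  exact (ConnectedComponent.sound (p.toPath.1.takeUntil z hz).reachable).symm

theorem exists_isPath_lift [DecidableEq H.ConnectedComponent] (hH : H ≤ G)
    {a b : H.ConnectedComponent} (p : (contraction G H.connectedComponentMk).Walk a b)
    (hp : p.IsPath) {v u : V} (hv : H.connectedComponentMk v = a)
    (hu : H.connectedComponentMk u = b) :
    ∃ q : G.Walk v u, q.IsPath ∧
      (q.support.map H.connectedComponentMk).destutter (· ≠ ·) = p.support := by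
  induction p generalizing v with
  | nil =>
    obtain ⟨q, hq, hq_comp⟩ := exists_isPath_of_connectedComponentMk_eq hH (hv.trans hu.symm)
    refine ⟨q, hq, ?_⟩
    rw [← q.cons_tail_support, List.map_cons, List.destutter_ne_cons_of_forall_eq, hv,
      Walk.support_nil]
    exact List.forall_mem_map.mpr fun z hz => hq_comp z (List.mem_of_mem_tail hz)
  | cons hac p ih =>
    obtain ⟨hne, x, y, hx, hy, hxy⟩ := id hac
    rw [Walk.cons_isPath_iff] at hp
    obtain ⟨q₁, hq₁, hq₁_comp⟩ := exists_isPath_of_connectedComponentMk_eq hH (hv.trans hx.symm)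
    obtain ⟨q₂, hq₂, hq₂_proj⟩ := ih hp.1 hy hu
    refine ⟨q₁.append (.cons hxy q₂), ?_, ?_⟩
    · rw [Walk.isPath_def, Walk.support_append, Walk.support_cons, List.tail_cons,
        List.nodup_append]
      refine ⟨hq₁.support_nodup, hq₂.support_nodup, fun z hz₁ z' hz₂ hzz' => hp.2 ?_⟩
      subst hzz'
      rw [← hq₂_proj, List.mem_destutter_ne_iff, ← hv, ← hq₁_comp z hz₁]
      exact List.mem_map_of_mem hz₂
    · rw [Walk.support_append, Walk.support_cons, List.tail_cons, ← q₁.cons_tail_support,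
        ← q₂.cons_tail_support, List.map_append, List.map_cons, List.map_cons,
        List.destutter_ne_cons_append_cons_of_forall_eq _ (by rwa [hv, hy]), ← List.map_cons,
        q₂.cons_tail_support, hq₂_proj, hv, Walk.support_cons]
      exact List.forall_mem_map.mpr fun z hz => hq₁_comp z (List.mem_of_mem_tail hz)

theorem exists_isCycle_lift [DecidableEq H.ConnectedComponent] (hH : H ≤ G)
    {c : H.ConnectedComponent} (C : (contraction G H.connectedComponentMk).Walk c c)
    (hC : C.IsCycle) :
    ∃ B : CycleType G,
      (B.2.1.support.map H.connectedComponentMk).destutter (· ≠ ·) = C.support := by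
  cases C with
  | nil => exact absurd hC.three_le_length (by simp)
  | cons hcd p =>
    have hlen := hC.three_le_length
    obtain ⟨hne, x, y, hx, hy, hxy⟩ := id hcd
    rw [Walk.cons_isCycle_iff] at hC
    obtain ⟨q, hq, hq_proj⟩ := exists_isPath_lift hH p hC.1 hy hx
    have hq_len : p.length ≤ q.length := by
      have := (List.destutter_sublist (· ≠ ·) (q.support.map H.connectedComponentMk)).length_le
      rw [hq_proj, List.length_map, Walk.length_support, Walk.length_support] at this
      omega
    refine ⟨⟨x, .cons hxy q, (Walk.cons_isCycle_iff q hxy).mpr ⟨hq, fun he => ?_⟩⟩, ?_⟩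
    · rw [Sym2.eq_swap] at he
      have := hq.length_eq_one_of_mem_edges he
      rw [Walk.length_cons] at hlen
      omega
    · rw [Walk.support_cons, List.map_cons, List.destutter_cons', ← q.cons_tail_support,
        List.map_cons, List.destutter'_cons_pos _ (by rwa [hx, hy]), ← List.destutter_cons',
        ← List.map_cons, q.cons_tail_support, hq_proj, hx, Walk.support_cons]

theorem exists_mem_support_ne_ne_of_equiv [Finite V] (hH : H ≤ G)
    (hci : Nonempty (CycleType G ≃ CycleType (contraction G H.connectedComponentMk)))
    (B : CycleType G) (c₁ c₂ : H.ConnectedComponent) :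
    ∃ x ∈ B.2.1.support, H.connectedComponentMk x ≠ c₁ ∧ H.connectedComponentMk x ≠ c₂ := by
  classical
  obtain ⟨e⟩ := hci
  have := Finite.of_equiv _ e
  choose L hL using fun C : CycleType (contraction G H.connectedComponentMk) =>
    exists_isCycle_lift hH C.2.1 C.2.2
  have hL_inj : Function.Injective L := fun C C' h =>
    CycleType.ext_support (by rw [← hL, ← hL, h])
  obtain ⟨C, rfl⟩ := (Finite.injective_iff_surjective_of_equiv e.symm).mp hL_inj B
  obtain ⟨c, hc, hc₁, hc₂⟩ := C.2.2.exists_mem_support_ne_ne c₁ c₂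
  rw [← hL, List.mem_destutter_ne_iff, List.mem_map] at hc
  obtain ⟨x, hx, rfl⟩ := hc
  exact ⟨x, hx, hc₁, hc₂⟩

theorem connectedComponentMk_eq_or_eq_of_reachable_sup {u v u' v' x : V}
    (hu : H.connectedComponentMk u = H.connectedComponentMk u')
    (hv : H.connectedComponentMk v = H.connectedComponentMk v')
    (hx : (H ⊔ fromEdgeSet {s(u, v), s(u', v')}).Reachable u x) :
    H.connectedComponentMk x = H.connectedComponentMk u ∨
      H.connectedComponentMk x = H.connectedComponentMk v := by
  rw [reachable_iff_reflTransGen] at hx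
  induction hx with
  | refl => exact Or.inl rfl
  | @tail y z _ hyz ih =>
    rcases hyz with hyz | ⟨hyz, -⟩
    · rwa [← ConnectedComponent.connectedComponentMk_eq_of_adj hyz]
    · have hz : z ∈ s(u, v) ∨ z ∈ s(u', v') := by
        rcases hyz with h | h <;> simp [← Set.mem_singleton_iff.mp h]
      rw [Sym2.mem_iff, Sym2.mem_iff] at hz
      rcases hz with (rfl | rfl) | (rfl | rfl) <;> simp [hu, hv]

theorem exists_cycle_forall_mem_support_of_adj (hH : H ≤ G) {u v u' v' : V}
    (huv : G.Adj u v) (hu'v' : G.Adj u' v')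
    (hu : H.connectedComponentMk u = H.connectedComponentMk u')
    (hv : H.connectedComponentMk v = H.connectedComponentMk v') (huv_H : s(u, v) ∉ H.edgeSet)
    (hne : s(u, v) ≠ s(u', v') ∨ H.connectedComponentMk u = H.connectedComponentMk v) :
    ∃ B : CycleType G, ∀ x ∈ B.2.1.support, H.connectedComponentMk x = H.connectedComponentMk u ∨
      H.connectedComponentMk x = H.connectedComponentMk v := by
  classical
  set S := H ⊔ fromEdgeSet {s(u, v), s(u', v')}
  have hSG : S ≤ G := sup_le hH <| (fromEdgeSet_le G).mpr <| by
    rintro e ⟨rfl | rfl, -⟩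
    exacts [huv, hu'v']
  have hH_del : H ≤ S.deleteEdges {s(u, v)} := fun x y hxy =>
    deleteEdges_adj.mpr ⟨Or.inl hxy, fun h => huv_H (Set.mem_singleton_iff.mp h ▸ hxy)⟩
  have hreach : (S.deleteEdges {s(u, v)}).Reachable u v := by
    rcases hne with hne | hcomp
    · have hadj : (S.deleteEdges {s(u, v)}).Adj u' v' := deleteEdges_adj.mpr
        ⟨Or.inr ⟨by simp, hu'v'.ne⟩, fun h => hne (Set.mem_singleton_iff.mp h).symm⟩
      exact ((ConnectedComponent.exact hu).mono hH_del).trans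
        (hadj.reachable.trans ((ConnectedComponent.exact hv.symm).mono hH_del))
    · exact (ConnectedComponent.exact hcomp).mono hH_del
  obtain ⟨w, p, hp, he⟩ :=
    adj_and_reachable_delete_edges_iff_exists_cycle.mp ⟨Or.inr ⟨by simp, huv.ne⟩, hreach⟩
  refine ⟨⟨w, p.mapLe hSG, hp.mapLe hSG⟩, fun x hx => ?_⟩
  rw [Walk.support_mapLe_eq_support] at hx
  exact connectedComponentMk_eq_or_eq_of_reachable_sup hu hv <|
    (p.takeUntil u (p.fst_mem_support_of_mem_edges he)).reachable.symm.trans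
      (p.takeUntil x hx).reachable

theorem bijOn_map_edgeSet_contraction_of_equiv [Finite V] (hH : H ≤ G)
    (hci : Nonempty (CycleType G ≃ CycleType (contraction G H.connectedComponentMk))) :
    Set.BijOn (Sym2.map H.connectedComponentMk) (G.edgeSet \ H.edgeSet)
      (contraction G H.connectedComponentMk).edgeSet := by
  have no_cycle {u v u' v'} (huv : G.Adj u v) (hu'v' : G.Adj u' v')
      (hu : H.connectedComponentMk u = H.connectedComponentMk u')
      (hv : H.connectedComponentMk v = H.connectedComponentMk v') (huv_H : s(u, v) ∉ H.edgeSet)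
      (hne : s(u, v) ≠ s(u', v') ∨ H.connectedComponentMk u = H.connectedComponentMk v) :
      False := by
    obtain ⟨B, hB⟩ := exists_cycle_forall_mem_support_of_adj hH huv hu'v' hu hv huv_H hne
    obtain ⟨x, hx, hxu, hxv⟩ := exists_mem_support_ne_ne_of_equiv hH hci B _ _
    exact (hB x hx).elim hxu hxv
  refine ⟨?_, ?_, ?_⟩
  · rintro ⟨u, v⟩ ⟨huv, huv_H⟩
    exact ⟨fun h => no_cycle huv huv rfl rfl huv_H (Or.inr h), u, v, rfl, rfl, huv⟩
  · rintro ⟨u, v⟩ ⟨huv, huv_H⟩ ⟨u', v'⟩ ⟨hu'v', -⟩ h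
    by_contra hne
    rcases Sym2.eq_iff.mp h with ⟨hu, hv⟩ | ⟨hu, hv⟩
    · exact no_cycle huv hu'v' hu hv huv_H (Or.inl hne)
    · exact no_cycle huv hu'v'.symm hu hv huv_H (Or.inl (by rwa [Sym2.eq_swap (a := v')]))
  · rintro ⟨c, d⟩ ⟨hcd, x, y, rfl, rfl, hxy⟩
    exact ⟨s(x, y), ⟨hxy, fun h => hcd (ConnectedComponent.connectedComponentMk_eq_of_adj h)⟩,
      rfl⟩

end SimpleGraph

/-- If `G ⫽ E_cs` is cycle-invariant (there is a one-to-one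
correspondence between simple cycles of `G` and of `G ⫽ E_cs`), then it is edge-matching:
`|E(G) \ E_cs| = |E(G ⫽ E_cs)|`. -/
theorem edge_matching_of_cycle_invariant {n : ℕ} (G : SimpleGraph (Fin n))
    (Ecs : Set (Sym2 (Fin n))) (hE : Ecs ⊆ G.edgeSet)
    (hci : Nonempty (CycleType G ≃ CycleType (contractionE G Ecs))) :
    Nat.card (G.edgeSet \ Ecs : Set (Sym2 (Fin n))) =
      Nat.card (contractionE G Ecs).edgeSet := by
  have hH : SimpleGraph.fromEdgeSet Ecs ≤ G :=
    (SimpleGraph.fromEdgeSet_le G).mpr (Set.sdiff_subset.trans hE)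
  have hdiff : G.edgeSet \ (SimpleGraph.fromEdgeSet Ecs).edgeSet = G.edgeSet \ Ecs := by
    ext e
    simp
  rw [← hdiff]
  exact Nat.card_congr ((SimpleGraph.bijOn_map_edgeSet_contraction_of_equiv hH hci).equiv _)
end

section
/- Let G be a finite simple connected graph, v ∈ V(G), and let C be a connected component of G \ v. Set E_cs = E(G[C ∪ {v}]). Then the edge-based contraction G ⫽ E_cs equals the node-removal graph G \ C, and the contraction is edge-matching: |E(G) \ E_cs| = |E(G ⫽ E_cs)|. -/
/-
Every edge leaving `C` ends at `v`. Since `G` is connected, a walk from a vertex of `C` to `v`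
therefore stays inside `C` until it reaches `v`, so `C ∪ {v}` is a single class of the partition
induced by `E_cs`, and every other vertex is a singleton class. Representing the big class by `v`
identifies the classes with `V \ C`; an edge of `G` joins two distinct classes exactly when neither
end lies in `C`, i.e. exactly when it is an edge of `G \ C`, and these are the edges outside `E_cs`.
-/

theorem contraction_eq_map {V W : Type*} (G : SimpleGraph V) (f : V → W) :
    contraction G f = G.map f := by
  ext i j
  simp only [contraction, SimpleGraph.map_adj']
  grind

namespace SimpleGraph

variable {V W : Type*} {G : SimpleGraph V}

theorem spanningCoe_induce_adj {s : Set V} {a b : V} :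
    (G.induce s).spanningCoe.Adj a b ↔ G.Adj a b ∧ a ∈ s ∧ b ∈ s := by
  simp only [map_adj, comap_adj, Function.Embedding.subtype_apply]
  constructor
  · rintro ⟨a', b', h, rfl, rfl⟩
    exact ⟨h, a'.2, b'.2⟩
  · rintro ⟨h, ha, hb⟩
    exact ⟨⟨a, ha⟩, ⟨b, hb⟩, h, rfl, rfl⟩

theorem edgeSet_spanningCoe_induce (s : Set V) :
    (G.induce s).spanningCoe.edgeSet = {e ∈ G.edgeSet | ∀ x ∈ e, x ∈ s} := by
  ext e
  induction e with
  | _ a b => simp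

theorem card_edgeSet_spanningCoe {s : Set V} (G' : SimpleGraph s) :
    Nat.card G'.spanningCoe.edgeSet = Nat.card G'.edgeSet := by
  rw [edgeSet_map]
  exact Nat.card_image_of_injective (Function.Embedding.subtype _).sym2Map.injective _

theorem Reachable.eq_or_mem_of_spanningCoe_induce {s : Set V} {a b : V}
    (h : (G.induce s).spanningCoe.Reachable a b) : a = b ∨ a ∈ s ∧ b ∈ s := by
  obtain ⟨p⟩ := h
  induction p with
  | nil => exact .inl rfl
  | cons hab _ ih =>
    obtain ⟨-, ha, hb⟩ := spanningCoe_induce_adj.1 hab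
    exact .inr ⟨ha, ih.elim (· ▸ hb) And.right⟩

theorem ConnectedComponent.mem_image_supp_of_adj {s : Set V}
    (c : (G.induce s).ConnectedComponent) {x y : V} (hx : x ∈ Subtype.val '' c.supp)
    (hy : y ∈ s) (hxy : G.Adj x y) :
    y ∈ Subtype.val '' c.supp := by
  obtain ⟨x, hxc, rfl⟩ := hx
  refine ⟨⟨y, hy⟩, ?_, rfl⟩
  rw [mem_supp_iff] at hxc ⊢
  rw [← hxc]
  exact ConnectedComponent.sound
    (Adj.reachable (G := G.induce s) (u := ⟨y, hy⟩) (v := x) hxy.symm)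

noncomputable def induceIsoMapOfBijective (f : V → W) (s : Set V)
    (hf : Function.Bijective (f ∘ Subtype.val : s → W))
    (hadj : ∀ u w, G.Adj u w → f u ≠ f w → u ∈ s ∧ w ∈ s) :
    G.induce s ≃g G.map f where
  toEquiv := Equiv.ofBijective _ hf
  map_rel_iff' {a b} := by
    simp only [Equiv.ofBijective_apply, Function.comp_apply, map_adj', induce_adj]
    constructor
    · rintro ⟨hne, u, w, huw, hu, hw⟩
      obtain ⟨hus, hws⟩ := hadj u w huw (hu ▸ hw ▸ hne)
      obtain rfl : ⟨u, hus⟩ = a := hf.1 hu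
      obtain rfl : ⟨w, hws⟩ = b := hf.1 hw
      exact huw
    · intro hab
      exact ⟨fun h => hab.ne (congrArg Subtype.val (hf.1 h)), a, b, hab, rfl, rfl⟩

variable {v : V} {C : Set V}

theorem reachable_of_forall_adj_mem_insert (hG : G.Preconnected) (hvC : v ∉ C)
    (hnbr : ∀ x ∈ C, ∀ y, G.Adj x y → y ∈ insert v C) {x : V} (hx : x ∈ C) :
    (G.induce (insert v C)).spanningCoe.Reachable x v := by
  have key {x y : V} (p : G.Walk x y) : x ∈ C → y ∉ C →
      (G.induce (insert v C)).spanningCoe.Reachable x v := by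
    induction p with
    | nil => exact fun hx hy => absurd hx hy
    | @cons a b _ hab _ ih =>
      intro ha hy
      have hb := hnbr a ha b hab
      have hHab := spanningCoe_induce_adj.2 ⟨hab, Set.mem_insert_of_mem v ha, hb⟩
      rcases hb with rfl | hb
      · exact hHab.reachable
      · exact hHab.reachable.trans (ih hb hy)
  exact key (hG x v).some hx hvC

theorem bijective_connectedComponentMk_compl (hG : G.Preconnected) (hvC : v ∉ C)
    (hnbr : ∀ x ∈ C, ∀ y, G.Adj x y → y ∈ insert v C) :
    Function.Bijective ((G.induce (insert v C)).spanningCoe.connectedComponentMk ∘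
      Subtype.val : (Cᶜ : Set V) → _) := by
  refine ⟨fun x y hxy => ?_, fun c => ?_⟩
  · rcases (ConnectedComponent.exact hxy).eq_or_mem_of_spanningCoe_induce with h | ⟨hx, hy⟩
    · exact Subtype.ext h
    · exact Subtype.ext ((hx.resolve_right x.2).trans (hy.resolve_right y.2).symm)
  · induction c using ConnectedComponent.ind with
    | h x =>
      by_cases hx : x ∈ C
      · exact ⟨⟨v, hvC⟩, ConnectedComponent.sound
          (reachable_of_forall_adj_mem_insert hG hvC hnbr hx).symm⟩
      · exact ⟨⟨x, hx⟩, rfl⟩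

theorem mem_compl_of_adj_of_connectedComponentMk_ne
    (hnbr : ∀ x ∈ C, ∀ y, G.Adj x y → y ∈ insert v C) {u w : V} (huw : G.Adj u w)
    (hne : (G.induce (insert v C)).spanningCoe.connectedComponentMk u ≠
      (G.induce (insert v C)).spanningCoe.connectedComponentMk w) :
    u ∈ Cᶜ ∧ w ∈ Cᶜ := by
  have merge {a b : V} (hab : G.Adj a b) (ha : a ∈ C) :
      (G.induce (insert v C)).spanningCoe.Reachable a b :=
    (spanningCoe_induce_adj.2 ⟨hab, Set.mem_insert_of_mem v ha, hnbr a ha b hab⟩).reachable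
  exact ⟨fun hu => hne (ConnectedComponent.sound (merge huw hu)),
    fun hw => hne (ConnectedComponent.sound (merge huw.symm hw).symm)⟩

theorem edgeSet_sdiff_spanningCoe_induce_insert
    (hnbr : ∀ x ∈ C, ∀ y, G.Adj x y → y ∈ insert v C) :
    G.edgeSet \ (G.induce (insert v C)).spanningCoe.edgeSet =
      (G.induce Cᶜ).spanningCoe.edgeSet := by
  ext e
  induction e with
  | _ a b =>
    simp only [Set.mem_sdiff, mem_edgeSet, spanningCoe_induce_adj, Set.mem_compl_iff]
    constructor
    · rintro ⟨hab, hout⟩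
      refine ⟨hab, fun ha => hout ⟨hab, .inr ha, hnbr a ha b hab⟩,
        fun hb => hout ⟨hab, hnbr b hb a hab.symm, .inr hb⟩⟩
    · rintro ⟨hab, ha, hb⟩
      refine ⟨hab, fun ⟨_, ha', hb'⟩ => hab.ne ?_⟩
      exact (ha'.resolve_right ha).trans (hb'.resolve_right hb).symm

end SimpleGraph

/-- Let `G` be connected, `v` a vertex, and `C` a connected component of
`G \ v`. With `E_cs = E(G[C ∪ {v}])`, the edge-based contraction `G ⫽ E_cs` equals (is
isomorphic to) the node-removal graph `G \ C`, and the contraction is edge-matching: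
`|E(G) \ E_cs| = |E(G ⫽ E_cs)|`. -/
theorem contraction_node_removal_equiv {n : ℕ} (G : SimpleGraph (Fin n)) (hG : G.Connected)
    (v : Fin n) (C : Set (Fin n))
    (hC : ∃ c : (G.induce {u : Fin n | u ≠ v}).ConnectedComponent,
      C = Subtype.val '' c.supp)
    (Ecs : Set (Sym2 (Fin n)))
    (hEcs : Ecs = {e ∈ G.edgeSet | ∀ x ∈ e, x ∈ insert v C}) :
    Nonempty (contractionE G Ecs ≃g G.induce Cᶜ) ∧
    Nat.card (G.edgeSet \ Ecs : Set (Sym2 (Fin n))) =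
      Nat.card (contractionE G Ecs).edgeSet := by
  obtain ⟨c, hc⟩ := hC
  have hvC : v ∉ C := hc ▸ fun ⟨x, _, hx⟩ => x.2 hx
  have hnbr : ∀ x ∈ C, ∀ y, G.Adj x y → y ∈ insert v C := hc ▸
    fun x hx y hxy => (em (y = v)).imp id fun hy => c.mem_image_supp_of_adj hx hy hxy
  rw [← SimpleGraph.edgeSet_spanningCoe_induce] at hEcs
  subst hEcs
  rw [contractionE, SimpleGraph.fromEdgeSet_edgeSet, contraction_eq_map]
  let iso := (SimpleGraph.induceIsoMapOfBijective _ _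
    (SimpleGraph.bijective_connectedComponentMk_compl hG.preconnected hvC hnbr)
    fun _ _ => SimpleGraph.mem_compl_of_adj_of_connectedComponentMk_ne hnbr).symm
  refine ⟨⟨iso⟩, ?_⟩
  rw [SimpleGraph.edgeSet_sdiff_spanningCoe_induce_insert hnbr,
    SimpleGraph.card_edgeSet_spanningCoe, Nat.card_congr iso.mapEdgeSet]
end

section
/- Let G be a finite simple graph with Laplacian L(G), and let E_cs be an edge contraction set with edge contraction partition π such that the contraction G_r = G ⫽ E_cs is edge-matching. Let p_π : ℝ^r → ℝ^n be the partition lifting assigning to each vertex of G the value of its cell. Then for all nonzero x̃ ∈ ℝ^r, the Laplacian Rayleigh quotient satisfies R(L(G), p_π(x̃)) ≤ R(L(G_r), x̃), where R(L(H), x) = (∑_{{u,v} ∈ E(H)} (x_u − x_v)²) / (∑_{v} x_v²). -/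
/-- The Laplacian Rayleigh quotient of a graph:
`R(L(H), x) = (∑_{{u,v} ∈ E(H)} (x_u − x_v)²) / (∑_v x_v²)`. -/
noncomputable def lapR {V : Type*} (H : SimpleGraph V) (x : V → ℝ) : ℝ :=
  (∑ᶠ e ∈ H.edgeSet, Sym2.lift ⟨fun u v => (x u - x v) ^ 2, fun u v => by ring⟩ e) /
    (∑ᶠ v, x v ^ 2)

/-! The lift `x̃ ∘ π` is constant on cells, so the edges of `E_cs` (and all other edges inside a
cell) contribute nothing to its quadratic form, while the remaining edges cross between cells and
are mapped onto the edges of `G ⫽ E_cs`. Edge-matching says there are no more of them than edges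
of `G ⫽ E_cs`, so this map is a bijection and the two numerators agree. In the denominator each
cell `C` contributes `|C| x̃_C² ≥ x̃_C²`. -/

section

variable {V W : Type*}

noncomputable def sqDiff (x : V → ℝ) : Sym2 V → ℝ :=
  Sym2.lift ⟨fun u v => (x u - x v) ^ 2, fun u v => by ring⟩

lemma lapR_eq (H : SimpleGraph V) (x : V → ℝ) :
    lapR H x = (∑ᶠ e ∈ H.edgeSet, sqDiff x e) / ∑ᶠ v, x v ^ 2 := rfl

lemma sqDiff_nonneg (x : V → ℝ) (e : Sym2 V) : 0 ≤ sqDiff x e := by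
  induction e using Sym2.ind with
  | _ u v => exact sq_nonneg _

lemma sqDiff_eq_zero_of_isDiag (x : V → ℝ) {e : Sym2 V} (he : e.IsDiag) : sqDiff x e = 0 := by
  induction e using Sym2.ind with
  | _ u v =>
    obtain rfl := Sym2.mk_isDiag_iff.mp he
    simp [sqDiff]

lemma sqDiff_map (x : W → ℝ) (f : V → W) (e : Sym2 V) :
    sqDiff x (e.map f) = sqDiff (x ∘ f) e := by
  induction e using Sym2.ind with
  | _ u v => rfl

def crossingEdgeSet (G : SimpleGraph V) (f : V → W) : Set (Sym2 V) :=
  {e ∈ G.edgeSet | ¬(e.map f).IsDiag}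

lemma edgeSet_contraction (G : SimpleGraph V) (f : V → W) :
    (contraction G f).edgeSet = Sym2.map f '' crossingEdgeSet G f := by
  ext e'
  induction e' using Sym2.ind with
  | _ i j =>
    constructor
    · rintro ⟨hij, u, v, rfl, rfl, huv⟩
      exact ⟨s(u, v), ⟨huv, by simpa using hij⟩, rfl⟩
    · rintro ⟨e, ⟨he, hdiag⟩, hij⟩
      induction e using Sym2.ind with
      | _ u v =>
        rw [Sym2.map_mk] at hij hdiag
        rcases Sym2.eq_iff.mp hij with ⟨rfl, rfl⟩ | ⟨rfl, rfl⟩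
        · exact ⟨by simpa using hdiag, u, v, rfl, rfl, he⟩
        · exact ⟨by simpa [eq_comm] using hdiag, v, u, rfl, rfl, he.symm⟩

lemma finsum_sqDiff_contraction (G : SimpleGraph V) {f : V → W}
    (hf : (crossingEdgeSet G f).InjOn (Sym2.map f)) (x : W → ℝ) :
    ∑ᶠ e ∈ (contraction G f).edgeSet, sqDiff x e =
      ∑ᶠ e ∈ G.edgeSet, sqDiff (x ∘ f) e := by
  rw [edgeSet_contraction, finsum_mem_image hf]
  simp only [sqDiff_map]
  refine finsum_mem_inter_support_eq _ _ _ ?_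
  ext e
  simp only [crossingEdgeSet, Set.mem_inter_iff, Set.mem_ofPred_eq, Function.mem_support]
  constructor
  · rintro ⟨⟨he, -⟩, hne⟩
    exact ⟨he, hne⟩
  · rintro ⟨he, hne⟩
    refine ⟨⟨he, fun hdiag => hne ?_⟩, hne⟩
    rw [← sqDiff_map]
    exact sqDiff_eq_zero_of_isDiag x hdiag

lemma injOn_map_crossingEdgeSet_of_ncard_le [Finite V] (G : SimpleGraph V) (f : V → W)
    (h : (crossingEdgeSet G f).ncard ≤ (contraction G f).edgeSet.ncard) :
    (crossingEdgeSet G f).InjOn (Sym2.map f) := by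
  rw [← Set.ncard_image_iff (Set.toFinite _)]
  refine (Set.ncard_image_le (Set.toFinite _)).antisymm ?_
  rwa [← edgeSet_contraction]

lemma finsum_le_finsum_comp_of_surjective [Finite V] {f : V → W} (hf : f.Surjective)
    {g : W → ℝ} (hg : 0 ≤ g) : ∑ᶠ w, g w ≤ ∑ᶠ v, g (f v) := by
  classical
  have := Fintype.ofFinite V
  have := Fintype.ofSurjective f hf
  rw [finsum_eq_sum_of_fintype, finsum_eq_sum_of_fintype]
  calc ∑ w, g w = ∑ v ∈ Finset.univ.image (Function.surjInv hf), g (f v) := by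
        rw [Finset.sum_image (Function.injective_surjInv hf).injOn]
        simp only [Function.surjInv_eq hf]
    _ ≤ ∑ v, g (f v) :=
        Finset.sum_le_sum_of_subset_of_nonneg (Finset.subset_univ _) fun v _ _ => hg _

lemma isDiag_map_connectedComponentMk_of_mem {s : Set (Sym2 V)} {e : Sym2 V} (he : e ∈ s) :
    (e.map (SimpleGraph.fromEdgeSet s).connectedComponentMk).IsDiag := by
  induction e using Sym2.ind with
  | _ u v =>
    rw [Sym2.map_mk, Sym2.mk_isDiag_iff]
    obtain rfl | huv := eq_or_ne u v
    · rfl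
    · exact SimpleGraph.ConnectedComponent.sound
        ((SimpleGraph.fromEdgeSet_adj s).2 ⟨he, huv⟩).reachable

end

theorem lapR_partition_lift_le_general {n : ℕ} (G : SimpleGraph (Fin n))
    (Ecs : Set (Sym2 (Fin n)))
    (hem : Nat.card (G.edgeSet \ Ecs : Set (Sym2 (Fin n))) =
      Nat.card (contractionE G Ecs).edgeSet)
    (xt : (SimpleGraph.fromEdgeSet Ecs).ConnectedComponent → ℝ) (hxt : xt ≠ 0) :
    lapR G (fun v => xt ((SimpleGraph.fromEdgeSet Ecs).connectedComponentMk v)) ≤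
      lapR (contractionE G Ecs) xt := by
  set f := (SimpleGraph.fromEdgeSet Ecs).connectedComponentMk
  have hcross : crossingEdgeSet G f ⊆ G.edgeSet \ Ecs := fun e ⟨he, hdiag⟩ =>
    ⟨he, fun hEcs => hdiag (isDiag_map_connectedComponentMk_of_mem hEcs)⟩
  have hinj : (crossingEdgeSet G f).InjOn (Sym2.map f) := by
    refine injOn_map_crossingEdgeSet_of_ncard_le G f ?_
    calc (crossingEdgeSet G f).ncard ≤ (G.edgeSet \ Ecs).ncard := Set.ncard_le_ncard hcross
      _ = (contraction G f).edgeSet.ncard := by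
        rw [← Nat.card_coe_set_eq, hem, Nat.card_coe_set_eq, contractionE]
  have hden_pos : 0 < ∑ᶠ c, xt c ^ 2 := by
    obtain ⟨c, hc⟩ := Function.ne_iff.mp hxt
    exact finsum_pos (fun c => sq_nonneg _) ⟨c, sq_pos_of_ne_zero hc⟩ (Set.toFinite _)
  rw [lapR_eq, lapR_eq, contractionE, finsum_sqDiff_contraction G hinj]
  exact div_le_div_of_nonneg_left
    (finsum_nonneg fun e => finsum_nonneg fun _ => sqDiff_nonneg _ e) hden_pos
    (finsum_le_finsum_comp_of_surjective (fun c => c.exists_rep) fun c => sq_nonneg (xt c))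

/-- If the contraction `G_r = G ⫽ E_cs` is edge-matching, then for every
nonzero `x̃ : ℝ^r`, the partition lifting `p_π(x̃)` (constant on cells) satisfies
`R(L(G), p_π(x̃)) ≤ R(L(G_r), x̃)`. -/
theorem lapR_partition_lift_le {n : ℕ} (G : SimpleGraph (Fin n))
    (Ecs : Set (Sym2 (Fin n))) (hE : Ecs ⊆ G.edgeSet)
    (hem : Nat.card (G.edgeSet \ Ecs : Set (Sym2 (Fin n))) =
      Nat.card (contractionE G Ecs).edgeSet)
    (xt : (SimpleGraph.fromEdgeSet Ecs).ConnectedComponent → ℝ) (hxt : xt ≠ 0) :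
    lapR G (fun v => xt ((SimpleGraph.fromEdgeSet Ecs).connectedComponentMk v)) ≤
      lapR (contractionE G Ecs) xt :=
  lapR_partition_lift_le_general G Ecs hem xt hxt
end

section
/- Let G be a finite simple graph on n vertices and let E_cs be an edge contraction set of size n − r such that the contraction G_r = G ⫽ E_cs is edge-matching and node-removal equivalent (G_r = G \ V_S for some V_S ⊆ V(G)). Then G_r is Laplacian-interlacing with G: λ_k(L(G)) ≤ λ_k(L(G_r)) ≤ λ_{n−r+k}(L(G)) for k = 1,…,r. -/
open Classical in
/-- The graph Laplacian (degree matrix minus adjacency matrix), as a real matrix. -/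
noncomputable def lapMat {V : Type*} (H : SimpleGraph V) : Matrix V V ℝ :=
  fun u v => if u = v then ((H.neighborSet u).ncard : ℝ) else if H.Adj u v then -1 else 0

/-!
Both bounds are Courant–Fischer comparisons through a linear map `J : ℝ^r → ℝ^n`. For the lower
bound, `J` pulls a vector on the contracted vertices back along the quotient map: edge-matching
means that no two uncollapsed edges of `G` are merged, so `J` carries the Laplacian form of `G_r`
to that of `G` exactly, while it can only increase the Euclidean norm (enough, as `L(G)` is
positive semidefinite). For the upper bound, `J` extends a vector on `V(G) \ V_S ≅ V(G_r)` by
zero: this preserves the norm and can only increase the Laplacian form, by the edges leaving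
`V(G) \ V_S`. In either case a dimension count produces a nonzero vector on which the Rayleigh
quotients compare as required.
-/

open Finset Function Matrix SimpleGraph

section Sums

variable {α β M : Type*} [Fintype α] [Fintype β] [AddCommMonoid M]

lemma sum_comp_le_sum_of_injective [PartialOrder M] [IsOrderedAddMonoid M] {φ : α → β}
    (hφ : Injective φ) {g : β → M} (hg : 0 ≤ g) : ∑ a, g (φ a) ≤ ∑ b, g b := by
  classical
  rw [← sum_image hφ.injOn]
  exact sum_le_univ_sum_of_nonneg hg

lemma sum_le_sum_comp_of_surjective [PartialOrder M] [IsOrderedAddMonoid M] {f : α → β}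
    (hf : Surjective f) {g : β → M} (hg : 0 ≤ g) : ∑ b, g b ≤ ∑ a, g (f a) := by
  simpa only [Function.comp_apply, surjInv_eq hf] using
    sum_comp_le_sum_of_injective (injective_surjInv hf) (g := g ∘ f) fun a => hg (f a)

lemma sum_comp_extend_zero {R : Type*} [Zero R] {φ : α → β} (hφ : Injective φ) {g : R → M}
    (hg : g 0 = 0) (y : α → R) : ∑ b, g (extend φ y 0 b) = ∑ a, g (y a) := by
  classical
  calc ∑ b, g (extend φ y 0 b) = ∑ b ∈ univ.image φ, g (extend φ y 0 b) := by
        refine (sum_subset (subset_univ _) fun b _ hb => ?_).symm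
        rw [extend_apply' _ _ _ fun ⟨a, ha⟩ => hb (ha ▸ mem_image_of_mem φ (mem_univ a)),
          Pi.zero_apply, hg]
    _ = ∑ a, g (y a) := by simp only [sum_image hφ.injOn, hφ.extend_apply]

end Sums

lemma Tuple.card_filter_lt_sort_le {α : Type*} [LinearOrder α] {m : ℕ} (f : Fin m → α)
    (k : Fin m) : #{i | f i < f (Tuple.sort f k)} ≤ k := by
  rw [← Fin.card_Iio k]
  refine card_le_card_of_injOn (Tuple.sort f).symm (fun i hi => ?_)
    (Tuple.sort f).symm.injective.injOn
  rw [mem_coe, mem_filter, ← Equiv.apply_symm_apply (Tuple.sort f) i] at hi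
  simpa using lt_of_not_ge fun hk => hi.2.not_ge (Tuple.monotone_sort f hk)

lemma Tuple.card_filter_sort_lt_le {α : Type*} [LinearOrder α] {m : ℕ} (f : Fin m → α)
    (k : Fin m) : #{i | f (Tuple.sort f k) < f i} ≤ m - 1 - k := by
  rw [← Fin.card_Ioi k]
  refine card_le_card_of_injOn (Tuple.sort f).symm (fun i hi => ?_)
    (Tuple.sort f).symm.injective.injOn
  rw [mem_coe, mem_filter, ← Equiv.apply_symm_apply (Tuple.sort f) i] at hi
  simpa using lt_of_not_ge fun hk => hi.2.not_ge (Tuple.monotone_sort f hk)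

lemma exists_ne_zero_forall_mem_eq_zero {K E α β : Type*} [Field K] [AddCommGroup E]
    [Module K E] [FiniteDimensional K E] [Fintype α] [Fintype β]
    (f : E →ₗ[K] α → K) (g : E →ₗ[K] β → K) (s : Finset α) (t : Finset β)
    (h : #s + #t < Module.finrank K E) :
    ∃ x ≠ 0, (∀ i ∈ s, f x i = 0) ∧ ∀ i ∈ t, g x i = 0 := by
  let φ := (LinearMap.funLeft K K ((↑) : s → α) ∘ₗ f).prod
    (LinearMap.funLeft K K ((↑) : t → β) ∘ₗ g)
  have hker : LinearMap.ker φ ≠ ⊥ := LinearMap.ker_ne_bot_of_finrank_lt (by simpa using h)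
  obtain ⟨x, hx, hx0⟩ := (Submodule.ne_bot_iff _).1 hker
  simp only [LinearMap.mem_ker, φ, LinearMap.prod_apply] at hx
  exact ⟨x, hx0, fun i hi => congrFun (congrArg Prod.fst hx) ⟨i, hi⟩,
    fun i hi => congrFun (congrArg Prod.snd hx) ⟨i, hi⟩⟩

namespace Matrix

variable {ι : Type*} [Fintype ι]

lemma dotProduct_submatrix_equiv_symm_mulVec {κ : Type*} [Fintype κ] (e : ι ≃ κ)
    (M : Matrix ι ι ℝ) (x : κ → ℝ) :
    x ⬝ᵥ M.submatrix e.symm e.symm *ᵥ x = (x ∘ e) ⬝ᵥ M *ᵥ (x ∘ e) := by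
  rw [submatrix_mulVec_equiv, dotProduct_comp_equiv_symm, Equiv.symm_symm]

lemma dotProduct_mul_mul_star_mulVec (U M : Matrix ι ι ℝ) (x : ι → ℝ) :
    x ⬝ᵥ (U * M * star U) *ᵥ x = (star U *ᵥ x) ⬝ᵥ M *ᵥ (star U *ᵥ x) := by
  rw [← mulVec_mulVec, ← mulVec_mulVec, dotProduct_mulVec, ← mulVec_transpose,
    star_eq_conjTranspose, conjTranspose_eq_transpose_of_trivial]

variable [DecidableEq ι] {A : Matrix ι ι ℝ}

lemma IsHermitian.dotProduct_mulVec_eq_sum_s16 (hA : A.IsHermitian) (x : ι → ℝ) :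
    x ⬝ᵥ A *ᵥ x = ∑ i, hA.eigenvalues i *
      (star (hA.eigenvectorUnitary : Matrix ι ι ℝ) *ᵥ x) i ^ 2 := by
  conv_lhs => rw [hA.spectral_theorem, Unitary.conjStarAlgAut_apply]
  rw [dotProduct_mul_mul_star_mulVec]
  simp only [dotProduct, mulVec_diagonal, RCLike.ofReal_real_eq_id, CompTriple.comp_eq]
  exact sum_congr rfl fun i _ => by ring

lemma IsHermitian.dotProduct_self_eq_sum (hA : A.IsHermitian) (x : ι → ℝ) :
    x ⬝ᵥ x = ∑ i, (star (hA.eigenvectorUnitary : Matrix ι ι ℝ) *ᵥ x) i ^ 2 := by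
  have h := dotProduct_mul_mul_star_mulVec (hA.eigenvectorUnitary : Matrix ι ι ℝ) 1 x
  rw [mul_one, Unitary.mul_star_self_of_mem hA.eigenvectorUnitary.2, one_mulVec, one_mulVec] at h
  rw [h]
  simp only [dotProduct, sq]

lemma IsHermitian.dotProduct_mulVec_le_s16 (hA : A.IsHermitian) {x : ι → ℝ} {μ : ℝ}
    (hx : ∀ i, μ < hA.eigenvalues i → (star (hA.eigenvectorUnitary : Matrix ι ι ℝ) *ᵥ x) i = 0) :
    x ⬝ᵥ A *ᵥ x ≤ μ * (x ⬝ᵥ x) := by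
  rw [hA.dotProduct_mulVec_eq_sum_s16, hA.dotProduct_self_eq_sum, mul_sum]
  refine sum_le_sum fun i _ => ?_
  rcases le_or_gt (hA.eigenvalues i) μ with hi | hi
  · exact mul_le_mul_of_nonneg_right hi (sq_nonneg _)
  · simp [hx i hi]

lemma IsHermitian.le_dotProduct_mulVec_s16 (hA : A.IsHermitian) {x : ι → ℝ} {μ : ℝ}
    (hx : ∀ i, hA.eigenvalues i < μ → (star (hA.eigenvectorUnitary : Matrix ι ι ℝ) *ᵥ x) i = 0) :
    μ * (x ⬝ᵥ x) ≤ x ⬝ᵥ A *ᵥ x := by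
  rw [hA.dotProduct_mulVec_eq_sum_s16, hA.dotProduct_self_eq_sum, mul_sum]
  refine sum_le_sum fun i _ => ?_
  rcases le_or_gt μ (hA.eigenvalues i) with hi | hi
  · exact mul_le_mul_of_nonneg_right hi (sq_nonneg _)
  · simp [hx i hi]

end Matrix

section Interlacing

variable {n r : ℕ} {A : Matrix (Fin n) (Fin n) ℝ} {B : Matrix (Fin r) (Fin r) ℝ}

lemma sortedEig_eq {m : ℕ} {A : Matrix (Fin m) (Fin m) ℝ} (hA : A.IsHermitian) (k : Fin m) :
    sortedEig A k = hA.eigenvalues (Tuple.sort hA.eigenvalues k) := by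
  rw [sortedEig, dif_pos hA]

lemma sortedEig_le_sortedEig_of_pullback_le (hA : A.PosSemidef) (hB : B.IsHermitian)
    (J : (Fin r → ℝ) →ₗ[ℝ] Fin n → ℝ) (hquad : ∀ x, J x ⬝ᵥ A *ᵥ J x ≤ x ⬝ᵥ B *ᵥ x)
    (hnorm : ∀ x, x ⬝ᵥ x ≤ J x ⬝ᵥ J x) (k : Fin r) (hk : (k : ℕ) < n) :
    sortedEig A ⟨k, hk⟩ ≤ sortedEig B k := by
  have hμ := Tuple.card_filter_lt_sort_le hA.1.eigenvalues ⟨k, hk⟩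
  have hν := Tuple.card_filter_sort_lt_le hB.eigenvalues k
  rw [sortedEig_eq hA.1, sortedEig_eq hB]
  set μ := hA.1.eigenvalues (Tuple.sort hA.1.eigenvalues ⟨k, hk⟩)
  set ν := hB.eigenvalues (Tuple.sort hB.eigenvalues k)
  obtain ⟨x, hx0, hxB, hxA⟩ := exists_ne_zero_forall_mem_eq_zero
    (mulVecLin (star (hB.eigenvectorUnitary : Matrix (Fin r) (Fin r) ℝ)))
    (mulVecLin (star (hA.1.eigenvectorUnitary : Matrix (Fin n) (Fin n) ℝ)) ∘ₗ J)
    {j | ν < hB.eigenvalues j} {i | hA.1.eigenvalues i < μ}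
    (by simp only [Module.finrank_fin_fun] at hμ ⊢; omega)
  refine le_of_mul_le_mul_right ?_ (dotProduct_self_star_pos_iff.2 hx0)
  calc μ * (x ⬝ᵥ x) ≤ μ * (J x ⬝ᵥ J x) :=
        mul_le_mul_of_nonneg_left (hnorm x) (hA.eigenvalues_nonneg _)
    _ ≤ J x ⬝ᵥ A *ᵥ J x := hA.1.le_dotProduct_mulVec_s16 fun i hi => hxA i (by simpa using hi)
    _ ≤ x ⬝ᵥ B *ᵥ x := hquad x
    _ ≤ ν * (x ⬝ᵥ x) := hB.dotProduct_mulVec_le_s16 fun j hj => hxB j (by simpa using hj)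

lemma sortedEig_le_sortedEig_of_le_pullback (hA : A.IsHermitian) (hB : B.IsHermitian)
    (J : (Fin r → ℝ) →ₗ[ℝ] Fin n → ℝ) (hquad : ∀ x, x ⬝ᵥ B *ᵥ x ≤ J x ⬝ᵥ A *ᵥ J x)
    (hnorm : ∀ x, J x ⬝ᵥ J x = x ⬝ᵥ x) (k : Fin r) (hk : n - r + k < n) :
    sortedEig B k ≤ sortedEig A ⟨n - r + k, hk⟩ := by
  have hμ := Tuple.card_filter_sort_lt_le hA.eigenvalues ⟨n - r + k, hk⟩
  have hν := Tuple.card_filter_lt_sort_le hB.eigenvalues k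
  rw [sortedEig_eq hA, sortedEig_eq hB]
  set μ := hA.eigenvalues (Tuple.sort hA.eigenvalues ⟨n - r + k, hk⟩)
  set ν := hB.eigenvalues (Tuple.sort hB.eigenvalues k)
  obtain ⟨x, hx0, hxB, hxA⟩ := exists_ne_zero_forall_mem_eq_zero
    (mulVecLin (star (hB.eigenvectorUnitary : Matrix (Fin r) (Fin r) ℝ)))
    (mulVecLin (star (hA.eigenvectorUnitary : Matrix (Fin n) (Fin n) ℝ)) ∘ₗ J)
    {j | hB.eigenvalues j < ν} {i | μ < hA.eigenvalues i}
    (by simp only [Module.finrank_fin_fun] at hμ ⊢; omega)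
  refine le_of_mul_le_mul_right ?_ (dotProduct_self_star_pos_iff.2 hx0)
  calc ν * (x ⬝ᵥ x) ≤ x ⬝ᵥ B *ᵥ x := hB.le_dotProduct_mulVec_s16 fun j hj => hxB j (by simpa using hj)
    _ ≤ J x ⬝ᵥ A *ᵥ J x := hquad x
    _ ≤ μ * (J x ⬝ᵥ J x) := hA.dotProduct_mulVec_le_s16 fun i hi => hxA i (by simpa using hi)
    _ = μ * (x ⬝ᵥ x) := by rw [hnorm]

end Interlacing

section Laplacian

variable {V W : Type*}

lemma lapMat_eq_lapMatrix [Fintype V] [DecidableEq V] (H : SimpleGraph V) [DecidableRel H.Adj] :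
    lapMat H = H.lapMatrix ℝ := by
  ext u v
  by_cases huv : u = v
  · subst huv
    simp [lapMat, lapMatrix, degMatrix, degree, neighborFinset, Set.ncard_eq_toFinset_card']
  · by_cases h : H.Adj u v <;> simp [lapMat, lapMatrix, degMatrix, huv, h]

lemma posSemidef_lapMat [Fintype V] (H : SimpleGraph V) : (lapMat H).PosSemidef := by
  classical
  rw [lapMat_eq_lapMatrix]
  exact posSemidef_lapMatrix ℝ H

open Classical in
lemma dotProduct_lapMat_mulVec [Fintype V] (H : SimpleGraph V) (x : V → ℝ) :
    x ⬝ᵥ lapMat H *ᵥ x = (∑ u, ∑ v, if H.Adj u v then (x u - x v) ^ 2 else 0) / 2 := by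
  rw [lapMat_eq_lapMatrix, ← toLinearMap₂'_apply', lapMatrix_toLinearMap₂']

lemma connectedComponentMk_fromEdgeSet_eq_of_mem {C : Set (Sym2 V)} {u v : V} (h : s(u, v) ∈ C) :
    (fromEdgeSet C).connectedComponentMk u = (fromEdgeSet C).connectedComponentMk v := by
  by_cases huv : u = v
  · rw [huv]
  · exact ConnectedComponent.connectedComponentMk_eq_of_adj ((fromEdgeSet_adj _).2 ⟨h, huv⟩)

variable [Fintype V] [Fintype W]

lemma dotProduct_lapMat_mulVec_le_extend {H : SimpleGraph W} {G : SimpleGraph V} (φ : H →g G)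
    (hφ : Injective φ) (y : W → ℝ) :
    y ⬝ᵥ lapMat H *ᵥ y ≤ extend φ y 0 ⬝ᵥ lapMat G *ᵥ extend φ y 0 := by
  classical
  rw [dotProduct_lapMat_mulVec, dotProduct_lapMat_mulVec]
  gcongr
  set x := extend φ y 0
  let g : V → V → ℝ := fun u v => if G.Adj u v then (x u - x v) ^ 2 else 0
  have hg : ∀ u v, 0 ≤ g u v := fun u v => by positivity
  calc ∑ a, ∑ b, (if H.Adj a b then (y a - y b) ^ 2 else 0) ≤ ∑ a, ∑ b, g (φ a) (φ b) := by
        refine sum_le_sum fun a _ => sum_le_sum fun b _ => ?_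
        by_cases h : H.Adj a b
        · simp [g, x, h, φ.map_adj h, hφ.extend_apply]
        · simpa [h] using hg (φ a) (φ b)
    _ ≤ ∑ a, ∑ v, g (φ a) v := sum_le_sum fun a _ => sum_comp_le_sum_of_injective hφ (hg _)
    _ ≤ ∑ u, ∑ v, g u v := sum_comp_le_sum_of_injective hφ fun u => sum_nonneg fun v _ => hg u v

lemma image_prodMap_filter_adj_eq [DecidableEq W] (G : SimpleGraph V) [DecidableRel G.Adj]
    (f : V → W) [DecidableRel (contraction G f).Adj] :
    (univ.filter fun p : V × V => G.Adj p.1 p.2 ∧ f p.1 ≠ f p.2).image (Prod.map f f) =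
      univ.filter fun q : W × W => (contraction G f).Adj q.1 q.2 := by
  ext ⟨a, b⟩
  simp only [mem_image, mem_filter, mem_univ, true_and, Prod.exists, Prod.map_apply, Prod.mk.injEq]
  constructor
  · rintro ⟨u, v, ⟨huv, hne⟩, rfl, rfl⟩
    exact ⟨hne, u, v, rfl, rfl, huv⟩
  · rintro ⟨hne, u, v, rfl, rfl, huv⟩
    exact ⟨u, v, ⟨huv, hne⟩, rfl, rfl⟩

lemma dotProduct_lapMat_comp_eq (G : SimpleGraph V) (f : V → W)
    (hf : Set.InjOn (Prod.map f f) {p | G.Adj p.1 p.2 ∧ f p.1 ≠ f p.2}) (z : W → ℝ) :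
    (z ∘ f) ⬝ᵥ lapMat G *ᵥ (z ∘ f) = z ⬝ᵥ lapMat (contraction G f) *ᵥ z := by
  classical
  rw [dotProduct_lapMat_mulVec, dotProduct_lapMat_mulVec]
  congr 1
  set S := univ.filter fun p : V × V => G.Adj p.1 p.2 ∧ f p.1 ≠ f p.2
  have hS : Set.InjOn (Prod.map f f) S := by simpa [S] using hf
  calc ∑ u, ∑ v, (if G.Adj u v then ((z ∘ f) u - (z ∘ f) v) ^ 2 else 0)
      = ∑ p ∈ S, (z (f p.1) - z (f p.2)) ^ 2 := by
        rw [sum_filter, ← Fintype.sum_prod_type']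
        refine sum_congr rfl fun p _ => ?_
        by_cases hp : f p.1 = f p.2 <;> simp [hp]
    _ = ∑ q ∈ S.image (Prod.map f f), (z q.1 - z q.2) ^ 2 :=
        (sum_image (f := fun q => (z q.1 - z q.2) ^ 2) hS).symm
    _ = ∑ a, ∑ b, if (contraction G f).Adj a b then (z a - z b) ^ 2 else 0 := by
        rw [image_prodMap_filter_adj_eq, sum_filter]
        exact Fintype.sum_prod_type _

lemma injOn_prodMap_of_card_edgeSet_diff_eq (G : SimpleGraph V) (f : V → W) (C : Set (Sym2 V))
    (hC : ∀ u v, s(u, v) ∈ C → f u = f v)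
    (hcard : Nat.card (G.edgeSet \ C : Set (Sym2 V)) = Nat.card (contraction G f).edgeSet) :
    Set.InjOn (Prod.map f f) {p | G.Adj p.1 p.2 ∧ f p.1 ≠ f p.2} := by
  classical
  set S := univ.filter fun p : V × V => G.Adj p.1 p.2 ∧ f p.1 ≠ f p.2
  have hS : #S ≤ 2 * Nat.card (G.edgeSet \ C : Set (Sym2 V)) := by
    rw [← edgeSet_deleteEdges, Nat.card_eq_fintype_card, ← edgeFinset_card,
      two_mul_card_edgeFinset]
    exact card_le_card (monotone_filter_right _ fun p _ hp =>
      (deleteEdges_adj ..).2 ⟨hp.1, fun h => hp.2 (hC _ _ h)⟩)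
  have hT : #(S.image (Prod.map f f)) = 2 * Nat.card (contraction G f).edgeSet := by
    rw [image_prodMap_filter_adj_eq, Nat.card_eq_fintype_card, ← edgeFinset_card,
      two_mul_card_edgeFinset]
  have hinj : Set.InjOn (Prod.map f f) S :=
    injOn_of_card_image_eq (le_antisymm card_image_le (by omega))
  simpa [S] using hinj

end Laplacian

theorem laplacian_interlacing_node_removal_contraction_general {n r : ℕ} (hrn : r < n)
    (G : SimpleGraph (Fin n))
    (Ecs : Set (Sym2 (Fin n)))
    (hem : Nat.card (G.edgeSet \ Ecs : Set (Sym2 (Fin n))) =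
      Nat.card (contractionE G Ecs).edgeSet)
    (VS : Finset (Fin n))
    (hnr : Nonempty (contractionE G Ecs ≃g G.induce (↑(VSᶜ) : Set (Fin n))))
    (e : (SimpleGraph.fromEdgeSet Ecs).ConnectedComponent ≃ Fin r) :
    Interlaces hrn ((lapMat (contractionE G Ecs)).submatrix e.symm e.symm) (lapMat G) := by
  classical
  let := Fintype.ofEquiv (Fin r) e.symm
  obtain ⟨φ⟩ := hnr
  set κ := (fromEdgeSet Ecs).connectedComponentMk
  have hB := (posSemidef_lapMat (contractionE G Ecs)).submatrix e.symm
  have hκ : Surjective κ := Quot.mk_surjective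
  have hinj := injOn_prodMap_of_card_edgeSet_diff_eq G κ Ecs
    (fun _ _ => connectedComponentMk_fromEdgeSet_eq_of_mem) hem
  let ι : contractionE G Ecs →g G := (Embedding.induce _).toHom.comp φ.toHom
  have hι : Injective ι := Subtype.val_injective.comp φ.injective
  intro k
  constructor
  · refine sortedEig_le_sortedEig_of_pullback_le (posSemidef_lapMat G) hB.1
      (LinearMap.funLeft ℝ ℝ (e ∘ κ)) (fun y => ?_) (fun y => ?_) k _
    · rw [dotProduct_submatrix_equiv_symm_mulVec]
      exact (dotProduct_lapMat_comp_eq G κ hinj (y ∘ e)).le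
    · rw [← comp_equiv_dotProduct_comp_equiv y y e]
      exact sum_le_sum_comp_of_surjective hκ fun c => mul_self_nonneg _
  · refine sortedEig_le_sortedEig_of_le_pullback (posSemidef_lapMat G).1 hB.1
      (ExtendByZero.linearMap ℝ ι ∘ₗ LinearMap.funLeft ℝ ℝ e) (fun y => ?_) (fun y => ?_) k _
    · rw [dotProduct_submatrix_equiv_symm_mulVec]
      exact dotProduct_lapMat_mulVec_le_extend ι hι (y ∘ e)
    · rw [← comp_equiv_dotProduct_comp_equiv y y e]
      exact sum_comp_extend_zero (g := fun t : ℝ => t * t) hι (mul_zero 0) (y ∘ e)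

/-- If the contraction `G_r = G ⫽ E_cs` (with `|E_cs| = n - r`, `r < n`)
is edge-matching and node-removal equivalent (`G_r ≅ G \ V_S`), then `G_r` is
Laplacian-interlacing with `G`: `λ_k(L(G)) ≤ λ_k(L(G_r)) ≤ λ_{n−r+k}(L(G))`. -/
theorem laplacian_interlacing_node_removal_contraction {n r : ℕ} (hrn : r < n)
    (G : SimpleGraph (Fin n))
    (Ecs : Set (Sym2 (Fin n))) (hE : Ecs ⊆ G.edgeSet) (hcard : Nat.card Ecs = n - r)
    (hem : Nat.card (G.edgeSet \ Ecs : Set (Sym2 (Fin n))) =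
      Nat.card (contractionE G Ecs).edgeSet)
    (VS : Finset (Fin n))
    (hnr : Nonempty (contractionE G Ecs ≃g G.induce (↑(VSᶜ) : Set (Fin n))))
    (e : (SimpleGraph.fromEdgeSet Ecs).ConnectedComponent ≃ Fin r) :
    Interlaces hrn ((lapMat (contractionE G Ecs)).submatrix e.symm e.symm) (lapMat G) :=
  laplacian_interlacing_node_removal_contraction_general hrn G Ecs hem VS hnr e
end
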